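/- Let ξ be a nonnegative solution of the discrete Safronov–Dubovskiǐ coagulation equation with finite first moment and symmetric nonnegative kernel. Then for each q ≥ 1 the partial number of clusters f_q(t) = Σ_{i=1}^{q} ξᵢ(t) satisfies d f_q/dt ≤ −(1/2) Σ_{i=1}^{q} Σ_{j=1}^{q} γ_{i,j} ξᵢ(t) ξ_j(t) ≤ 0; in particular f_q is nonincreasing in t. -/

import Mathlib

/-!
The gain term and the first loss term of the equation for `ξᵢ` form a discrete difference
`Aᵢ₋₁ - Aᵢ` of the nonnegative flux `Aᵢ = ξᵢ ∑_{j ≤ i} j γᵢⱼ ξⱼ`, so they telescope to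
`-A_q ≤ 0`. The remaining loss terms dominate `∑_{i ≤ j ≤ q} γᵢⱼ ξᵢ ξⱼ`, which by symmetry of
`γ` is at least half of the full double sum over `[1, q]²`.
-/

open Finset

theorem sum_Icc_one_sub_pred (A : ℕ → ℝ) (q : ℕ) :
    ∑ i ∈ Icc 1 q, (A (i - 1) - A i) = A 0 - A q := by
  induction q with
  | zero => simp
  | succ q ih =>
    rw [sum_Icc_succ_top (Nat.le_add_left 1 q), ih, Nat.add_sub_cancel]
    ring

theorem sum_sum_add_sum_diag_eq_two_mul {α : Type*} [LinearOrder α] (s : Finset α)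
    (F : α → α → ℝ) (hF : ∀ i j, F i j = F j i) :
    ∑ i ∈ s, ∑ j ∈ s, F i j + ∑ i ∈ s, F i i
      = 2 * ∑ i ∈ s, ∑ j ∈ s, if i ≤ j then F i j else 0 := by
  have h_lower : ∑ i ∈ s, ∑ j ∈ s, (if j ≤ i then F i j else 0)
      = ∑ i ∈ s, ∑ j ∈ s, if i ≤ j then F i j else 0 := by
    rw [sum_comm]
    simp only [hF]
  have h_diag : ∑ i ∈ s, ∑ j ∈ s, (if i = j then F i j else 0) = ∑ i ∈ s, F i i := by
    refine sum_congr rfl fun i hi => ?_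
    rw [sum_ite_eq, if_pos hi]
  rw [two_mul, ← h_diag]
  nth_rewrite 2 [← h_lower]
  simp only [← sum_add_distrib]
  refine sum_congr rfl fun i _ => sum_congr rfl fun j _ => ?_
  rcases lt_trichotomy i j with h | rfl | h
  · simp [h.le, h.ne, not_le.mpr h]
  · simp
  · simp [h.le, h.ne', not_le.mpr h]

namespace SafronovDubovskii

variable (γ : ℕ → ℕ → ℝ) (x : ℕ → ℝ)

def flux (i : ℕ) : ℝ := x i * ∑ j ∈ Icc 1 i, (j : ℝ) * γ i j * x j

noncomputable def lossRate (i : ℕ) : ℝ := ∑' j : ℕ, if i ≤ j then γ i j * x j else 0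

noncomputable def rate (i : ℕ) : ℝ := flux γ x (i - 1) - flux γ x i - x i * lossRate γ x i

variable {γ x}

theorem flux_nonneg (hγ : ∀ i j, 0 ≤ γ i j) (hx : ∀ i, 1 ≤ i → 0 ≤ x i) {i : ℕ} (hi : 1 ≤ i) :
    0 ≤ flux γ x i :=
  mul_nonneg (hx i hi) <| sum_nonneg fun j hj =>
    mul_nonneg (mul_nonneg j.cast_nonneg (hγ i j)) (hx j (mem_Icc.mp hj).1)

theorem sum_sum_kernel_nonneg (hγ : ∀ i j, 0 ≤ γ i j) (hx : ∀ i, 1 ≤ i → 0 ≤ x i) (q : ℕ) :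
    0 ≤ ∑ i ∈ Icc 1 q, ∑ j ∈ Icc 1 q, γ i j * x i * x j :=
  sum_nonneg fun i hi => sum_nonneg fun j hj =>
    mul_nonneg (mul_nonneg (hγ i j) (hx i (mem_Icc.mp hi).1)) (hx j (mem_Icc.mp hj).1)

theorem sum_rate (q : ℕ) :
    ∑ i ∈ Icc 1 q, rate γ x i = -flux γ x q - ∑ i ∈ Icc 1 q, x i * lossRate γ x i := by
  have h_flux_zero : flux γ x 0 = 0 := by simp [flux]
  simp only [rate, sum_sub_distrib (f := fun i => flux γ x (i - 1) - flux γ x i)]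
  rw [sum_Icc_one_sub_pred, h_flux_zero, zero_sub]

theorem sum_ite_le_mul_lossRate (hγ : ∀ i j, 0 ≤ γ i j) (hx : ∀ i, 1 ≤ i → 0 ≤ x i)
    {i : ℕ} (hi : 1 ≤ i) (hloss : Summable fun j => if i ≤ j then γ i j * x j else 0)
    (s : Finset ℕ) :
    ∑ j ∈ s, (if i ≤ j then γ i j * x i * x j else 0) ≤ x i * lossRate γ x i := by
  have h_nonneg : ∀ j, 0 ≤ if i ≤ j then γ i j * x j else 0 := fun j => by
    split_ifs with h
    · exact mul_nonneg (hγ i j) (hx j (hi.trans h))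
    · exact le_rfl
  calc ∑ j ∈ s, (if i ≤ j then γ i j * x i * x j else 0)
      = x i * ∑ j ∈ s, (if i ≤ j then γ i j * x j else 0) := by
        rw [mul_sum]
        refine sum_congr rfl fun j _ => ?_
        split_ifs <;> ring
    _ ≤ x i * lossRate γ x i :=
        mul_le_mul_of_nonneg_left (hloss.sum_le_tsum s fun j _ => h_nonneg j) (hx i hi)

theorem sum_rate_le (hγ : ∀ i j, 0 ≤ γ i j) (hγ_symm : ∀ i j, γ i j = γ j i)
    (hx : ∀ i, 1 ≤ i → 0 ≤ x i)
    (hloss : ∀ i, 1 ≤ i → Summable fun j => if i ≤ j then γ i j * x j else 0)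
    {q : ℕ} (hq : 1 ≤ q) :
    ∑ i ∈ Icc 1 q, rate γ x i ≤ -(1 / 2) * ∑ i ∈ Icc 1 q, ∑ j ∈ Icc 1 q, γ i j * x i * x j := by
  have h_symm := sum_sum_add_sum_diag_eq_two_mul (Icc 1 q) (fun i j => γ i j * x i * x j)
    fun i j => by rw [hγ_symm]; ring
  have h_diag : 0 ≤ ∑ i ∈ Icc 1 q, γ i i * x i * x i := sum_nonneg fun i hi =>
    have hxi := hx i (mem_Icc.mp hi).1
    mul_nonneg (mul_nonneg (hγ i i) hxi) hxi
  have h_loss : ∑ i ∈ Icc 1 q, ∑ j ∈ Icc 1 q, (if i ≤ j then γ i j * x i * x j else 0)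
      ≤ ∑ i ∈ Icc 1 q, x i * lossRate γ x i := sum_le_sum fun i hi =>
    have hi1 := (mem_Icc.mp hi).1
    sum_ite_le_mul_lossRate hγ hx hi1 (hloss i hi1) _
  have h_flux := flux_nonneg hγ hx hq
  rw [sum_rate]
  linarith

end SafronovDubovskii

open SafronovDubovskii in
theorem stmt_9_general
    (γ : ℕ → ℕ → ℝ) (hγ_nonneg : ∀ i j, 0 ≤ γ i j) (hγ_symm : ∀ i j, γ i j = γ j i)
    (ξ : ℕ → ℝ → ℝ) (d : ℕ → ℝ → ℝ)
    (hξ_nonneg : ∀ i : ℕ, 1 ≤ i → ∀ t ∈ Set.Ici (0:ℝ), 0 ≤ ξ i t)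
    (hsum_loss : ∀ i : ℕ, 1 ≤ i → ∀ t ∈ Set.Ici (0:ℝ),
      Summable (fun j : ℕ => if i ≤ j then γ i j * ξ j t else 0))
    (hξ_deriv : ∀ i : ℕ, 1 ≤ i → ∀ t ∈ Set.Ici (0:ℝ), HasDerivAt (ξ i) (d i t) t)
    (hd : ∀ i : ℕ, 1 ≤ i → ∀ t ∈ Set.Ici (0:ℝ),
      d i t = ξ (i - 1) t * ∑ j ∈ Icc 1 (i - 1), (j : ℝ) * γ (i - 1) j * ξ j t
        - ξ i t * ∑ j ∈ Icc 1 i, (j : ℝ) * γ i j * ξ j t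
        - ξ i t * ∑' j : ℕ, (if i ≤ j then γ i j * ξ j t else 0))
    (q : ℕ) (hq : 1 ≤ q) :
    (∀ t ∈ Set.Ici (0:ℝ),
      ∑ i ∈ Icc 1 q, d i t ≤
        -(1 / 2) * ∑ i ∈ Icc 1 q, ∑ j ∈ Icc 1 q, γ i j * ξ i t * ξ j t ∧
      -(1 / 2) * ∑ i ∈ Icc 1 q, ∑ j ∈ Icc 1 q, γ i j * ξ i t * ξ j t ≤ 0) ∧
    AntitoneOn (fun t => ∑ i ∈ Icc 1 q, ξ i t) (Set.Ici (0:ℝ)) := by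
  have h_bound : ∀ t ∈ Set.Ici (0:ℝ),
      ∑ i ∈ Icc 1 q, d i t ≤
        -(1 / 2) * ∑ i ∈ Icc 1 q, ∑ j ∈ Icc 1 q, γ i j * ξ i t * ξ j t ∧
      -(1 / 2) * ∑ i ∈ Icc 1 q, ∑ j ∈ Icc 1 q, γ i j * ξ i t * ξ j t ≤ 0 := fun t ht => by
    have hx i (hi : 1 ≤ i) := hξ_nonneg i hi t ht
    have h_rate : ∀ i ∈ Icc 1 q, d i t = rate γ (ξ · t) i := fun i hi =>
      hd i (mem_Icc.mp hi).1 t ht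
    refine ⟨?_, mul_nonpos_of_nonpos_of_nonneg (by norm_num)
      (sum_sum_kernel_nonneg hγ_nonneg hx q)⟩
    rw [sum_congr rfl h_rate]
    exact sum_rate_le hγ_nonneg hγ_symm hx (fun i hi => hsum_loss i hi t ht) hq
  have h_deriv : ∀ t ∈ Set.Ici (0:ℝ),
      HasDerivAt (fun t => ∑ i ∈ Icc 1 q, ξ i t) (∑ i ∈ Icc 1 q, d i t) t := fun t ht =>
    HasDerivAt.fun_sum fun i hi => hξ_deriv i (mem_Icc.mp hi).1 t ht
  refine ⟨h_bound, antitoneOn_of_hasDerivWithinAt_nonpos (convex_Ici 0)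
    (fun t ht => (h_deriv t ht).continuousAt.continuousWithinAt)
    (fun t ht => (h_deriv t (interior_subset ht)).hasDerivWithinAt) fun t ht => ?_⟩
  have := h_bound t (interior_subset ht)
  exact this.1.trans this.2

theorem stmt_9
    (γ : ℕ → ℕ → ℝ) (hγ_nonneg : ∀ i j, 0 ≤ γ i j) (hγ_symm : ∀ i j, γ i j = γ j i)
    (ξ : ℕ → ℝ → ℝ) (d : ℕ → ℝ → ℝ)
    (hξ_nonneg : ∀ i : ℕ, 1 ≤ i → ∀ t ∈ Set.Ici (0:ℝ), 0 ≤ ξ i t)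
    (hmoment : ∀ t ∈ Set.Ici (0:ℝ), Summable (fun i : ℕ => (i : ℝ) * ξ i t))
    (hsum_loss : ∀ i : ℕ, 1 ≤ i → ∀ t ∈ Set.Ici (0:ℝ),
      Summable (fun j : ℕ => if i ≤ j then γ i j * ξ j t else 0))
    (hξ_deriv : ∀ i : ℕ, 1 ≤ i → ∀ t ∈ Set.Ici (0:ℝ), HasDerivAt (ξ i) (d i t) t)
    (hd : ∀ i : ℕ, 1 ≤ i → ∀ t ∈ Set.Ici (0:ℝ),
      d i t = ξ (i - 1) t * ∑ j ∈ Icc 1 (i - 1), (j : ℝ) * γ (i - 1) j * ξ j t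
        - ξ i t * ∑ j ∈ Icc 1 i, (j : ℝ) * γ i j * ξ j t
        - ξ i t * ∑' j : ℕ, (if i ≤ j then γ i j * ξ j t else 0))
    (q : ℕ) (hq : 1 ≤ q) :
    (∀ t ∈ Set.Ici (0:ℝ),
      ∑ i ∈ Icc 1 q, d i t ≤
        -(1 / 2) * ∑ i ∈ Icc 1 q, ∑ j ∈ Icc 1 q, γ i j * ξ i t * ξ j t ∧
      -(1 / 2) * ∑ i ∈ Icc 1 q, ∑ j ∈ Icc 1 q, γ i j * ξ i t * ξ j t ≤ 0) ∧
    AntitoneOn (fun t => ∑ i ∈ Icc 1 q, ξ i t) (Set.Ici (0:ℝ)) :=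
  stmt_9_general γ hγ_nonneg hγ_symm ξ d hξ_nonneg hsum_loss hξ_deriv hd q hq
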